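/- Conversely, if the 5-subdivision G' of G has a vertex cover of size τ + 2|E|, then G has a vertex cover of size at most τ. -/

import Mathlib

/-!
Each edge `a b` of `G` becomes the path `a – x₀ – x₁ – x₂ – x₃ – b` in the subdivision. A cover
must contain two of the `xᵢ` just to cover `x₀x₁` and `x₂x₃`, and if it contains neither `a` nor
`b` it must contain `x₀`, `x₃` and one of `x₁, x₂`, so three of them. Hence the original vertices
of the cover, together with one endpoint of each edge whose endpoints both lie outside the cover,
form a cover of `G` of size at most `|S| - 2|E|`.
-/

/-- Vertices of the 5-subdivision of a graph on `V`: original vertices, plus 4 internal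
vertices for each (oriented `a < b`) edge. -/
abbrev SubVert (V : Type*) := V ⊕ (V × V × Fin 4)

/-- One-directional adjacency of the 5-subdivision: for each edge `a —G— b` with `a < b`,
the path `a – (a,b,0) – (a,b,1) – (a,b,2) – (a,b,3) – b`. -/
def subdivRel {V : Type*} [LinearOrder V] (G : SimpleGraph V) :
    SubVert V → SubVert V → Prop
  | Sum.inl u, Sum.inr (a, b, i) =>
      G.Adj a b ∧ a < b ∧ ((u = a ∧ i = 0) ∨ (u = b ∧ i = 3))
  | Sum.inr (a, b, i), Sum.inr (a', b', j) =>
      a = a' ∧ b = b' ∧ G.Adj a b ∧ a < b ∧ (i : ℕ) + 1 = (j : ℕ)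
  | _, _ => False

/-- The 5-subdivision of `G`: every edge is replaced by a path of 5 edges. -/
def subdiv {V : Type*} [LinearOrder V] (G : SimpleGraph V) : SimpleGraph (SubVert V) where
  Adj x y := subdivRel G x y ∨ subdivRel G y x
  symm := ⟨fun _ _ h => h.symm⟩
  loopless := by
    refine ⟨?_⟩
    rintro (u | ⟨a, b, i⟩) h
    · rcases h with h | h <;> exact h.elim
    · rcases h with ⟨-, -, -, -, h⟩ | ⟨-, -, -, -, h⟩ <;> omega

/-- `S` is a vertex cover of `H`. -/
def IsCover {W : Type*} (H : SimpleGraph W) (S : Set W) : Prop :=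
  ∀ ⦃u v : W⦄, H.Adj u v → u ∈ S ∨ v ∈ S

open Finset

lemma Fin.two_le_card_of_covers_path {I : Finset (Fin 4)} (h₀₁ : 0 ∈ I ∨ 1 ∈ I)
    (h₂₃ : 2 ∈ I ∨ 3 ∈ I) : 2 ≤ #I := by
  revert I
  decide

lemma Fin.three_le_card_of_covers_path_of_ends {I : Finset (Fin 4)} (h₀ : 0 ∈ I)
    (h₁₂ : 1 ∈ I ∨ 2 ∈ I) (h₃ : 3 ∈ I) : 3 ≤ #I := by
  revert I
  decide

lemma two_mul_card_add_card_filter_le_sum {ι : Type*} (P : Finset ι) (q : ι → Prop)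
    [DecidablePred q] (f : ι → ℕ) (h₂ : ∀ p ∈ P, 2 ≤ f p) (h₃ : ∀ p ∈ P, q p → 3 ≤ f p) :
    2 * #P + #{p ∈ P | q p} ≤ ∑ p ∈ P, f p :=
  calc 2 * #P + #{p ∈ P | q p} = ∑ p ∈ P, (2 + if q p then 1 else 0) := by
        rw [sum_add_distrib, sum_const, sum_boole, smul_eq_mul, mul_comm, Nat.cast_id]
    _ ≤ ∑ p ∈ P, f p := sum_le_sum fun p hp => by
        split_ifs with hq
        · exact h₃ p hp hq
        · simpa using h₂ p hp

section LinearOrder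

variable {V : Type*} [LinearOrder V] {G : SimpleGraph V}

lemma isCover_of_forall_lt {C : Set V} (h : ∀ a b, G.Adj a b → a < b → a ∈ C ∨ b ∈ C) :
    IsCover G C := by
  intro u v huv
  rcases huv.ne.lt_or_gt with hlt | hgt
  · exact h u v huv hlt
  · exact (h v u huv.symm hgt).symm

lemma card_filter_adj_lt_eq_card_edgeFinset [Fintype V] [DecidableRel G.Adj] :
    #{p : V × V | G.Adj p.1 p.2 ∧ p.1 < p.2} = #G.edgeFinset := by
  refine card_nbij (fun p => s(p.1, p.2)) (fun p hp => ?_) (fun p hp q hq hpq => ?_) ?_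
  · simpa using (mem_filter.1 hp).2.1
  · simp only [coe_filter, Set.mem_ofPred_eq, mem_univ, true_and] at hp hq
    rcases Sym2.eq_iff.1 hpq with ⟨h₁, h₂⟩ | ⟨h₁, h₂⟩
    · exact Prod.ext h₁ h₂
    · exact absurd hq.2 (h₁ ▸ h₂ ▸ hp.2.asymm)
  · intro e he
    induction e using Sym2.ind with
    | h u v =>
      have huv : G.Adj u v := by simpa using he
      rcases huv.ne.lt_or_gt with hlt | hgt
      · exact ⟨(u, v), by simp [huv, hlt], rfl⟩
      · exact ⟨(v, u), by simp [huv.symm, hgt], Sym2.eq_swap⟩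

section Subdivision

variable {a b : V}

lemma subdiv_adj_inl_first (h : G.Adj a b) (hab : a < b) :
    (subdiv G).Adj (.inl a) (.inr (a, b, 0)) :=
  .inl ⟨h, hab, .inl ⟨rfl, rfl⟩⟩

lemma subdiv_adj_inl_last (h : G.Adj a b) (hab : a < b) :
    (subdiv G).Adj (.inl b) (.inr (a, b, 3)) :=
  .inl ⟨h, hab, .inr ⟨rfl, rfl⟩⟩

lemma subdiv_adj_inr_succ (h : G.Adj a b) (hab : a < b) {i j : Fin 4} (hij : (i : ℕ) + 1 = j) :
    (subdiv G).Adj (.inr (a, b, i)) (.inr (a, b, j)) :=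
  .inl ⟨rfl, rfl, h, hab, hij⟩

def internalHits (S : Finset (SubVert V)) (a b : V) : Finset (Fin 4) :=
  {i | .inr (a, b, i) ∈ S}

variable {S : Finset (SubVert V)}

@[simp]
lemma mem_internalHits {i : Fin 4} : i ∈ internalHits S a b ↔ .inr (a, b, i) ∈ S := by
  simp [internalHits]

lemma two_le_card_internalHits (hS : IsCover (subdiv G) (S : Set (SubVert V)))
    (h : G.Adj a b) (hab : a < b) : 2 ≤ #(internalHits S a b) :=
  Fin.two_le_card_of_covers_path (by simpa using hS (subdiv_adj_inr_succ h hab (i := 0) rfl))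
    (by simpa using hS (subdiv_adj_inr_succ h hab (i := 2) rfl))

lemma three_le_card_internalHits (hS : IsCover (subdiv G) (S : Set (SubVert V)))
    (h : G.Adj a b) (hab : a < b) (ha : .inl a ∉ S) (hb : .inl b ∉ S) :
    3 ≤ #(internalHits S a b) :=
  Fin.three_le_card_of_covers_path_of_ends
    (by simpa [ha] using hS (subdiv_adj_inl_first h hab))
    (by simpa using hS (subdiv_adj_inr_succ h hab (i := 1) rfl))
    (by simpa [hb] using hS (subdiv_adj_inl_last h hab))

lemma sum_card_internalHits_le (P : Finset (V × V)) :
    ∑ p ∈ P, #(internalHits S p.1 p.2) ≤ #S.toRight := by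
  rw [← card_sigma]
  refine card_le_card_of_injOn (fun x => (x.1.1, x.1.2, x.2)) (fun x hx => ?_) ?_
  · simpa using (mem_sigma.1 hx).2
  · rintro ⟨p, i⟩ - ⟨q, j⟩ - h
    simp only [Prod.mk.injEq] at h
    obtain ⟨h₁, h₂, rfl⟩ := h
    rw [Prod.ext h₁ h₂]

end Subdivision

end LinearOrder

/-- If the 5-subdivision of `G` has a vertex cover of size `τ + 2|E|`, then `G` has a
vertex cover of size at most `τ`. -/
theorem cover_of_subdiv_cover {V : Type*} [Fintype V] [LinearOrder V]
    (G : SimpleGraph V) [DecidableRel G.Adj] (τ : ℕ)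
    (S : Finset (SubVert V)) (hS : IsCover (subdiv G) (S : Set (SubVert V)))
    (hcard : S.card = τ + 2 * G.edgeFinset.card) :
    ∃ C : Finset V, IsCover G (C : Set V) ∧ C.card ≤ τ := by
  set P : Finset (V × V) := {p | G.Adj p.1 p.2 ∧ p.1 < p.2}
  set Q := P.filter fun p => .inl p.1 ∉ S ∧ .inl p.2 ∉ S
  refine ⟨S.toLeft ∪ Q.image Prod.fst, isCover_of_forall_lt fun a b h hab => ?_, ?_⟩
  · by_cases ha : .inl a ∈ S
    · simp [ha]
    by_cases hb : .inl b ∈ S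
    · simp [hb]
    exact .inl <| mem_coe.2 <| mem_union_right _ <|
      mem_image.2 ⟨(a, b), by simp [Q, P, h, hab, ha, hb], rfl⟩
  · have hP : ∀ p ∈ P, G.Adj p.1 p.2 ∧ p.1 < p.2 := fun p hp => (mem_filter.1 hp).2
    have hC : #(S.toLeft ∪ Q.image Prod.fst) ≤ #S.toLeft + #Q :=
      (card_union_le _ _).trans (Nat.add_le_add_left card_image_le _)
    have hR : 2 * #P + #Q ≤ #S.toRight :=
      (two_mul_card_add_card_filter_le_sum P _ _
        (fun p hp => two_le_card_internalHits hS (hP p hp).1 (hP p hp).2)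
        (fun p hp hq => three_le_card_internalHits hS (hP p hp).1 (hP p hp).2 hq.1 hq.2)).trans
        (sum_card_internalHits_le P)
    have hE : #P = #G.edgeFinset := card_filter_adj_lt_eq_card_edgeFinset
    have hS' := card_toLeft_add_card_toRight (u := S)
    omega
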